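/- In ℂ³ ⊗ ℂ⁴ ⊗ ℂ⁵, the set S = S₁ ∪ S₂ ∪ S₃ ∪ S₄ with S₁ = {(|0,i,j+1⟩ ± |2,i+1,j⟩)/√2 : i ∈ {0,1,2}, j ∈ {0,1,2,3}}, S₂ = {(|i+1,0,j⟩ ± |i,3,j+1⟩)/√2 : i ∈ {0,1}, j ∈ {0,1,2,3}}, S₃ = {(|i,j+1,0⟩ ± |i+1,j,4⟩)/√2 : i ∈ {0,1}, j ∈ {0,1,2}}, S₄ = {(|0,0,0⟩ ± |2,3,4⟩)/√2} consists of pairwise orthogonal unit vectors, each of which is genuinely entangled (entangled across all three bipartitions). -/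

import Mathlib

noncomputable def ket345 (a : Fin 3) (b : Fin 4) (c : Fin 5) :
    EuclideanSpace ℂ (Fin 3 × Fin 4 × Fin 5) :=
  EuclideanSpace.single (a, b, c) 1

noncomputable def S345 : Set (EuclideanSpace ℂ (Fin 3 × Fin 4 × Fin 5)) :=
  {v | ∃ ε : ℂ, (ε = 1 ∨ ε = -1) ∧
    ((∃ (i : Fin 3) (j : Fin 4), v = (Real.sqrt 2 : ℂ)⁻¹ •
        (ket345 0 i.castSucc j.succ + ε • ket345 2 i.succ j.castSucc)) ∨
     (∃ (i : Fin 2) (j : Fin 4), v = (Real.sqrt 2 : ℂ)⁻¹ •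
        (ket345 i.succ 0 j.castSucc + ε • ket345 i.castSucc 3 j.succ)) ∨
     (∃ (i : Fin 2) (j : Fin 3), v = (Real.sqrt 2 : ℂ)⁻¹ •
        (ket345 i.castSucc j.succ 0 + ε • ket345 i.succ j.castSucc 4)) ∨
     v = (Real.sqrt 2 : ℂ)⁻¹ • (ket345 0 0 0 + ε • ket345 2 3 4))}

/-!
Every vector of S has the form (|x⟩ ± |y⟩)/√2 with x and y differing in all three coordinates.
Orthogonality is a matter of supports: a finite check shows that two supports {x, y} occurring in
S are equal or disjoint, and on equal supports the signs are opposite. For the cut A|BC: if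
v (a, b, c) = f a * g (b, c) is nonzero at x and at y, then f x_A ≠ 0 and g y_BC ≠ 0, so v is
nonzero at the mixed index (x_A, y_BC), which is neither x nor y.
-/

open ComplexConjugate

theorem not_exists_mul_of_apply_eq_zero {ι α β R : Type*} [MulZeroClass R] [NoZeroDivisors R]
    {v : ι → R} (p : ι → α) (q : ι → β) {x y z : ι} (hx : v x ≠ 0) (hy : v y ≠ 0)
    (hz : v z = 0) (hzx : p z = p x) (hzy : q z = q y) :
    ¬ ∃ (f : α → R) (g : β → R), ∀ i, v i = f (p i) * g (q i) := by
  rintro ⟨f, g, hfg⟩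
  rw [hfg] at hx hy hz
  rw [hzx, hzy] at hz
  exact mul_ne_zero (left_ne_zero_of_mul hx) (right_ne_zero_of_mul hy) hz

section BellPair

variable {ι : Type*} [DecidableEq ι]

noncomputable def bellPair (x y : ι) (ε : ℂ) : EuclideanSpace ℂ ι :=
  (Real.sqrt 2 : ℂ)⁻¹ • (EuclideanSpace.single x 1 + ε • EuclideanSpace.single y 1)

theorem bellPair_apply (x y : ι) (ε : ℂ) (z : ι) :
    bellPair x y ε z =
      (Real.sqrt 2 : ℂ)⁻¹ * ((if z = x then 1 else 0) + ε * if z = y then 1 else 0) := by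
  simp only [bellPair, PiLp.smul_apply, PiLp.add_apply, PiLp.single_apply, smul_eq_mul, mul_ite,
    mul_one, mul_zero]

theorem bellPair_not_exists_mul {α β : Type*} {x y : ι} {ε : ℂ} (hε : ε ≠ 0)
    (p : ι → α) (q : ι → β) (hp : p x ≠ p y) (hq : q x ≠ q y) {z : ι} (hzx : p z = p x)
    (hzy : q z = q y) : ¬ ∃ (f : α → ℂ) (g : β → ℂ), ∀ i, bellPair x y ε i = f (p i) * g (q i) := by
  have hxy : x ≠ y := fun h => hp (congrArg p h)
  have hzx' : z ≠ x := fun h => hq (by rw [← h, hzy])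
  have hzy' : z ≠ y := fun h => hp (by rw [← hzx, h])
  refine not_exists_mul_of_apply_eq_zero p q (x := x) (y := y) ?_ ?_ ?_ hzx hzy <;>
    simp [bellPair_apply, hxy, hxy.symm, hzx', hzy', hε]

variable [Fintype ι]

theorem inner_bellPair (x y x' y' : ι) (ε ε' : ℂ) :
    inner ℂ (bellPair x y ε) (bellPair x' y' ε') =
      2⁻¹ * ((if x = x' then 1 else 0) + ε' * (if x = y' then 1 else 0) +
        conj ε * (if y = x' then 1 else 0) + conj ε * ε' * (if y = y' then 1 else 0)) := by
  have h : conj (Real.sqrt 2 : ℂ)⁻¹ * (Real.sqrt 2 : ℂ)⁻¹ = 2⁻¹ := by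
    rw [map_inv₀, Complex.conj_ofReal, ← mul_inv, ← Complex.ofReal_mul,
      Real.mul_self_sqrt zero_le_two, Complex.ofReal_ofNat]
  rw [← h]
  simp only [bellPair, inner_smul_left, inner_smul_right, inner_add_left, inner_add_right,
    EuclideanSpace.inner_single_left, PiLp.single_apply, map_one, one_mul]
  split_ifs <;> ring

theorem norm_bellPair {x y : ι} (hxy : x ≠ y) {ε : ℂ} (hε : ‖ε‖ = 1) :
    ‖bellPair x y ε‖ = 1 := by
  have h : inner ℂ (bellPair x y ε) (bellPair x y ε) = 1 := by
    rw [inner_bellPair, Complex.conj_mul', hε]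
    norm_num [hxy, hxy.symm]
  rw [norm_eq_sqrt_re_inner (𝕜 := ℂ), h, RCLike.one_re, Real.sqrt_one]

theorem inner_bellPair_neg {x y : ι} (hxy : x ≠ y) {ε : ℂ} (hε : ‖ε‖ = 1) :
    inner ℂ (bellPair x y ε) (bellPair x y (-ε)) = 0 := by
  rw [inner_bellPair, mul_neg, Complex.conj_mul', hε]
  simp [hxy, hxy.symm]

theorem inner_bellPair_of_disjoint {x y x' y' : ι} (h₁ : x ≠ x') (h₂ : x ≠ y') (h₃ : y ≠ x')
    (h₄ : y ≠ y') (ε ε' : ℂ) : inner ℂ (bellPair x y ε) (bellPair x' y' ε') = 0 := by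
  simp [inner_bellPair, h₁, h₂, h₃, h₄]

end BellPair

theorem bellPair_not_biseparable {α β γ : Type*} [DecidableEq α] [DecidableEq β] [DecidableEq γ]
    {x y : α × β × γ} (h₁ : x.1 ≠ y.1) (h₂ : x.2.1 ≠ y.2.1) (h₃ : x.2.2 ≠ y.2.2) {ε : ℂ}
    (hε : ε ≠ 0) :
    (¬ ∃ (f : α → ℂ) (g : β × γ → ℂ), ∀ a b c, bellPair x y ε (a, b, c) = f a * g (b, c)) ∧
    (¬ ∃ (f : β → ℂ) (g : α × γ → ℂ), ∀ a b c, bellPair x y ε (a, b, c) = f b * g (a, c)) ∧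
    (¬ ∃ (f : γ → ℂ) (g : α × β → ℂ), ∀ a b c, bellPair x y ε (a, b, c) = f c * g (a, b)) := by
  obtain ⟨a, b, c⟩ := x
  obtain ⟨a', b', c'⟩ := y
  refine ⟨fun ⟨f, g, h⟩ => ?_, fun ⟨f, g, h⟩ => ?_, fun ⟨f, g, h⟩ => ?_⟩
  · exact bellPair_not_exists_mul hε (fun i : α × β × γ => i.1) (fun i => i.2) h₁
      (by simp [h₂]) (z := (a, b', c')) rfl rfl ⟨f, g, fun i => h i.1 i.2.1 i.2.2⟩
  · exact bellPair_not_exists_mul hε (fun i : α × β × γ => i.2.1) (fun i => (i.1, i.2.2)) h₂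
      (by simp [h₁]) (z := (a', b, c')) rfl rfl ⟨f, g, fun i => h i.1 i.2.1 i.2.2⟩
  · exact bellPair_not_exists_mul hε (fun i : α × β × γ => i.2.2) (fun i => (i.1, i.2.1)) h₃
      (by simp [h₁]) (z := (a', b', c)) rfl rfl ⟨f, g, fun i => h i.1 i.2.1 i.2.2⟩

def S345Supports : List ((Fin 3 × Fin 4 × Fin 5) × (Fin 3 × Fin 4 × Fin 5)) :=
  ((List.finRange 3).product (List.finRange 4)).map
      (fun ij => ((0, ij.1.castSucc, ij.2.succ), (2, ij.1.succ, ij.2.castSucc))) ++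
    ((List.finRange 2).product (List.finRange 4)).map
      (fun ij => ((ij.1.succ, 0, ij.2.castSucc), (ij.1.castSucc, 3, ij.2.succ))) ++
    ((List.finRange 2).product (List.finRange 3)).map
      (fun ij => ((ij.1.castSucc, ij.2.succ, 0), (ij.1.succ, ij.2.castSucc, 4))) ++
    [((0, 0, 0), (2, 3, 4))]

theorem S345Supports_coords_ne : ∀ p ∈ S345Supports,
    p.1.1 ≠ p.2.1 ∧ p.1.2.1 ≠ p.2.2.1 ∧ p.1.2.2 ≠ p.2.2.2 := by
  decide

theorem S345Supports_eq_or_disjoint : ∀ p ∈ S345Supports, ∀ q ∈ S345Supports,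
    p = q ∨ (p.1 ≠ q.1 ∧ p.1 ≠ q.2 ∧ p.2 ≠ q.1 ∧ p.2 ≠ q.2) := by
  decide

theorem exists_bellPair_of_mem_S345 {v : EuclideanSpace ℂ (Fin 3 × Fin 4 × Fin 5)} (hv : v ∈ S345) :
    ∃ ε : ℂ, (ε = 1 ∨ ε = -1) ∧ ∃ x y, (x, y) ∈ S345Supports ∧ v = bellPair x y ε := by
  obtain ⟨ε, hε, hv⟩ := hv
  refine ⟨ε, hε, ?_⟩
  rcases hv with ⟨i, j, rfl⟩ | ⟨i, j, rfl⟩ | ⟨i, j, rfl⟩ | rfl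
  all_goals refine ⟨_, _, ?_, rfl⟩
  all_goals simp [S345Supports]

theorem stmt_16 :
    ∀ v ∈ S345, ‖v‖ = 1 ∧
      (∀ w ∈ S345, v ≠ w → (inner ℂ v w : ℂ) = 0) ∧
      (¬ ∃ (f : Fin 3 → ℂ) (g : Fin 4 × Fin 5 → ℂ),
          ∀ a b c, v (a, b, c) = f a * g (b, c)) ∧
      (¬ ∃ (f : Fin 4 → ℂ) (g : Fin 3 × Fin 5 → ℂ),
          ∀ a b c, v (a, b, c) = f b * g (a, c)) ∧
      (¬ ∃ (f : Fin 5 → ℂ) (g : Fin 3 × Fin 4 → ℂ),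
          ∀ a b c, v (a, b, c) = f c * g (a, b)) := by
  intro v hv
  obtain ⟨ε, hε, x, y, hmem, rfl⟩ := exists_bellPair_of_mem_S345 hv
  have hε₁ : ‖ε‖ = 1 := by rcases hε with rfl | rfl <;> simp
  obtain ⟨h₁, h₂, h₃⟩ := S345Supports_coords_ne _ hmem
  have hne : x ≠ y := fun h => h₁ (congrArg Prod.fst h)
  refine ⟨norm_bellPair hne hε₁, ?_,
    bellPair_not_biseparable h₁ h₂ h₃ (norm_ne_zero_iff.mp (by simp [hε₁]))⟩
  intro w hw hvw
  obtain ⟨ε', hε', x', y', hmem', rfl⟩ := exists_bellPair_of_mem_S345 hw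
  rcases S345Supports_eq_or_disjoint _ hmem _ hmem' with h | ⟨hxx, hxy, hyx, hyy⟩
  · obtain ⟨rfl, rfl⟩ := Prod.ext_iff.mp h
    obtain rfl : ε' = -ε := by
      rcases hε with rfl | rfl <;> rcases hε' with rfl | rfl <;> simp_all
    exact inner_bellPair_neg hne hε₁
  · exact inner_bellPair_of_disjoint hxx hxy hyx hyy ε ε'
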